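/- Every theorem of C2.FS is valid on an order frame (W,<) if and only if the frame is flat and ancestral. -/

import Mathlib

/-- Sentences of the language L: atoms p₀,p₁,…, negation, conjunction, and the
binary conditional `>` (written `cond`). -/
inductive Formula : Type
  | atom : ℕ → Formula
  | neg : Formula → Formula
  | conj : Formula → Formula → Formula
  | cond : Formula → Formula → Formula
  deriving DecidableEq

namespace Formula

/-- Material implication, defined as usual: p → q := ¬(p ∧ ¬q). -/
def impl (p q : Formula) : Formula := (p.conj q.neg).neg
/-- Disjunction, defined as usual: p ∨ q := ¬(¬p ∧ ¬q). -/
def disj (p q : Formula) : Formula := (p.neg.conj q.neg).neg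
/-- Material biconditional, defined as usual. -/
def biimp (p q : Formula) : Formula := (p.impl q).conj (q.impl p)
/-- □p abbreviates ¬p > p. -/
def box (p : Formula) : Formula := p.neg.cond p
/-- ◇p abbreviates ¬□¬p. -/
def dia (p : Formula) : Formula := p.neg.box.neg
/-- ⊥ abbreviates p₀ ∧ ¬p₀. -/
def bot : Formula := (atom 0).conj (atom 0).neg

end Formula

/-- `p` is a classical propositional tautology (treating conditional formulas and
atoms alike as propositional atoms): every assignment of truth values that respects
¬ and ∧ makes `p` true. -/
def IsTautology (p : Formula) : Prop :=
  ∀ v : Formula → Prop,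
    (∀ q, v q.neg ↔ ¬ v q) →
    (∀ q r, v (q.conj r) ↔ v q ∧ v r) →
    v p

/-- Derivability from the axioms of C2 (all classical tautologies, Identity,
Reciprocity, MP, CEM) together with extra axioms `Ax`, closed under Detachment and
Normality; i.e., the smallest extension of C2 containing `Ax` that is closed under
Detachment and Normality. -/
inductive DerivC2 (Ax : Formula → Prop) : Formula → Prop
  | extra {p : Formula} : Ax p → DerivC2 Ax p
  | taut {p : Formula} : IsTautology p → DerivC2 Ax p
  | id (p : Formula) : DerivC2 Ax (p.cond p)
  | recip (p q r : Formula) :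
      DerivC2 Ax (((p.cond q).conj ((q.cond p).conj (p.cond r))).impl (q.cond r))
  | mpAx (p q : Formula) : DerivC2 Ax ((p.cond q).impl (p.impl q))
  | cem (p q : Formula) : DerivC2 Ax ((p.cond q).disj (p.cond q.neg))
  | detach {p q : Formula} : DerivC2 Ax (p.impl q) → DerivC2 Ax p → DerivC2 Ax q
  | normality {p q r : Formula} (s : Formula) : DerivC2 Ax ((p.conj q).impl r) →
      DerivC2 Ax (((s.cond p).conj (s.cond q)).impl (s.cond r))

/-- Stalnaker's conditional logic C2. -/
def C2 : Formula → Prop := DerivC2 (fun _ => False)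

/-- Instances of the Flattening schema: (p > ((p∧q) > r)) ↔ ((p∧q) > r). -/
def FlatteningAx (f : Formula) : Prop :=
  ∃ p q r : Formula, f = (p.cond ((p.conj q).cond r)).biimp ((p.conj q).cond r)

/-- C2.F: the smallest extension of C2 containing every instance of Flattening,
closed under Detachment and Normality. -/
def C2F : Formula → Prop := DerivC2 FlatteningAx

/-- Instances of the Sequentiality schema:
□(p → (¬p > r)) ∧ □(q → (¬q > r)) → ((p∨q) → (¬(p∨q) > r)). -/
def SequentialityAx (f : Formula) : Prop :=
  ∃ p q r : Formula,
    f = ((p.impl (p.neg.cond r)).box.conj (q.impl (q.neg.cond r)).box).impl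
          ((p.disj q).impl ((p.disj q).neg.cond r))

/-- C2.FS: the smallest extension of C2.F containing every instance of Sequentiality,
closed under Detachment and Normality. -/
def C2FS : Formula → Prop := DerivC2 (fun f => FlatteningAx f ∨ SequentialityAx f)

/-- An order frame: a nonempty type of worlds `W` together with, for each world
`w`, a strict well-order `lt w` (writing `lt w x y` for `x <_w y`) of a subset of
`W` (the field of `lt w`: the relation is transitive, well-founded, and connected
on its field), such that `x <_w y` implies `w = x` or `w <_w x`. -/
structure OrderFrame (W : Type) : Type where
  nonempty : Nonempty W
  lt : W → W → W → Prop
  trans : ∀ w x y z, lt w x y → lt w y z → lt w x z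
  wf : ∀ w, WellFounded (lt w)
  connected : ∀ w x y, (∃ z, lt w x z ∨ lt w z x) → (∃ z, lt w y z ∨ lt w z y) →
      x ≠ y → lt w x y ∨ lt w y x
  center : ∀ w x y, lt w x y → x = w ∨ lt w w x

namespace OrderFrame

variable {W : Type}

/-- Accessibility: `v ∈ R(w)` where `R(w) = {w} ∪ {v : w <_w v}`. -/
def acc (F : OrderFrame W) (w v : W) : Prop := v = w ∨ F.lt w w v

/-- `x ≤_w y` iff `x, y ∈ R(w)` and not `y <_w x`. -/
def wkle (F : OrderFrame W) (w x y : W) : Prop :=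
  F.acc w x ∧ F.acc w y ∧ ¬ F.lt w y x

end OrderFrame

/-- Truth at a world of an order model: atoms via the valuation `V`, Booleans
classically, and `p > q` is true at `w` iff either no world in `R(w)` satisfies `p`,
or there is `y ∈ R(w)` satisfying `p ∧ q` such that no `x <_w y` satisfies `p`. -/
def Truth {W : Type} (F : OrderFrame W) (V : ℕ → Set W) : Formula → W → Prop
  | .atom n, w => w ∈ V n
  | .neg p, w => ¬ Truth F V p w
  | .conj p q, w => Truth F V p w ∧ Truth F V q w
  | .cond p q, w =>
      (∀ v, F.acc w v → ¬ Truth F V p v) ∨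
      ∃ y, F.acc w y ∧ Truth F V p y ∧ Truth F V q y ∧
        ∀ x, F.lt w x y → ¬ Truth F V p x

/-- A frame is semi-flat iff for all w,x,y,z: if x <_w y and (y ≤_w z or
z ∈ R(x)\R(w)), then y ≤_x z. -/
def SemiFlat {W : Type} (F : OrderFrame W) : Prop :=
  ∀ w x y z, F.lt w x y →
    (F.wkle w y z ∨ (F.acc x z ∧ ¬ F.acc w z)) → F.wkle x y z

/-- The accessibility relation of the frame is transitive. -/
def TransAcc {W : Type} (F : OrderFrame W) : Prop :=
  ∀ w u v, F.acc w u → F.acc u v → F.acc w v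

/-- A frame is flat iff it is semi-flat and its accessibility relation is
transitive. -/
def Flat {W : Type} (F : OrderFrame W) : Prop := SemiFlat F ∧ TransAcc F

/-- `v` is the successor of `w`: `v = w` if `R(w) = {w}`, and otherwise `v` is the
`<_w`-least element of `R(w) \ {w}`. -/
def OrderFrame.SuccRel {W : Type} (F : OrderFrame W) (w v : W) : Prop :=
  ((∀ u, F.acc w u → u = w) ∧ v = w) ∨
  (F.lt w w v ∧ ∀ u, F.lt w w u → u = v ∨ F.lt w v u)

/-- A frame is ancestral iff every world accessible from `w` can be obtained from
`w` by finitely many successor steps. -/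
def Ancestral {W : Type} (F : OrderFrame W) : Prop :=
  ∀ w v, F.acc w v → Relation.ReflTransGen F.SuccRel w v

section Basic
variable {W : Type} {F : OrderFrame W}

namespace OrderFrame

lemma lt_asymm {w x y : W} (h : F.lt w x y) : ¬ F.lt w y x :=
  (F.wf w).asymmetric _ _ h

lemma lt_irrefl {w x : W} : ¬ F.lt w x x := fun h => lt_asymm h h

lemma acc_refl (w : W) : F.acc w w := Or.inl rfl

lemma acc_of_lt_left {w x y : W} (h : F.lt w x y) : F.acc w x := by
  rcases F.center w x y h with h' | h'
  · exact Or.inl h'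
  · exact Or.inr h'

lemma acc_of_lt_right {w x y : W} (h : F.lt w x y) : F.acc w y := by
  rcases F.center w x y h with h' | h'
  · exact Or.inr (h' ▸ h)
  · exact Or.inr (F.trans _ _ _ _ h' h)

lemma not_lt_base {w x : W} : ¬ F.lt w x w := by
  intro h
  rcases F.center w x w h with h' | h'
  · exact lt_irrefl (h' ▸ h)
  · exact lt_irrefl (F.trans _ _ _ _ h' h)

lemma lt_base_of_acc {w x : W} (h : F.acc w x) (hne : x ≠ w) : F.lt w w x := by
  rcases h with h | h
  · exact absurd h hne
  · exact h

/-- totality on R(w) -/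
lemma acc_total {w x y : W} (hx : F.acc w x) (hy : F.acc w y) :
    x = y ∨ F.lt w x y ∨ F.lt w y x := by
  by_cases hxy : x = y
  · exact Or.inl hxy
  by_cases hxw : x = w
  · subst hxw
    exact Or.inr (Or.inl (lt_base_of_acc hy (Ne.symm hxy)))
  by_cases hyw : y = w
  · subst hyw
    exact Or.inr (Or.inr (lt_base_of_acc hx hxy))
  · rcases F.connected w x y ⟨w, Or.inr (lt_base_of_acc hx hxw)⟩
      ⟨w, Or.inr (lt_base_of_acc hy hyw)⟩ hxy with h | h
    · exact Or.inr (Or.inl h)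
    · exact Or.inr (Or.inr h)

lemma lt_of_acc_of_not_lt {w x y : W} (hx : F.acc w x) (hy : F.acc w y)
    (hne : x ≠ y) (h : ¬ F.lt w y x) : F.lt w x y := by
  rcases acc_total hx hy with h' | h' | h'
  · exact absurd h' hne
  · exact h'
  · exact absurd h' h

end OrderFrame

/-- a "witness" for P at w : minimal P-world in R(w) -/
def Wit (F : OrderFrame W) (w : W) (P : W → Prop) (y : W) : Prop :=
  F.acc w y ∧ P y ∧ ∀ x, F.lt w x y → ¬ P x

lemma wit_exists {w : W} {P : W → Prop} (h : ∃ u, F.acc w u ∧ P u) :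
    ∃ y, Wit F w P y := by
  by_cases hw : P w
  · exact ⟨w, F.acc_refl w, hw, fun x hx _ => F.not_lt_base hx⟩
  · obtain ⟨u, hu, hPu⟩ := h
    have hune : u ≠ w := fun h => hw (h ▸ hPu)
    have hS : (({z | F.lt w w z ∧ P z}) : Set W).Nonempty :=
      ⟨u, F.lt_base_of_acc hu hune, hPu⟩
    refine ⟨(F.wf w).min _ hS, Or.inr ((F.wf w).min_mem _ hS).1,
      ((F.wf w).min_mem _ hS).2, ?_⟩
    intro x hx hPx
    have hxw : x ≠ w := fun h => hw (h ▸ hPx)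
    have hxacc : F.acc w x := F.acc_of_lt_left hx
    exact (F.wf w).not_lt_min {z | F.lt w w z ∧ P z} ⟨F.lt_base_of_acc hxacc hxw, hPx⟩ hx

lemma wit_unique {w : W} {P : W → Prop} {y₁ y₂ : W}
    (h₁ : Wit F w P y₁) (h₂ : Wit F w P y₂) : y₁ = y₂ := by
  rcases F.acc_total h₁.1 h₂.1 with h | h | h
  · exact h
  · exact absurd h₁.2.1 (h₂.2.2 _ h)
  · exact absurd h₂.2.1 (h₁.2.2 _ h)

lemma cond_iff {V : ℕ → Set W} {p q : Formula} {w : W} :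
    Truth F V (p.cond q) w ↔
      ∀ y, Wit F w (Truth F V p) y → Truth F V q y := by
  constructor
  · rintro (h | ⟨y₀, hy₀a, hy₀p, hy₀q, hy₀m⟩) y hy
    · exact absurd hy.2.1 (h y hy.1)
    · have : y = y₀ := wit_unique hy ⟨hy₀a, hy₀p, hy₀m⟩
      exact this ▸ hy₀q
  · intro h
    by_cases hex : ∃ u, F.acc w u ∧ Truth F V p u
    · obtain ⟨y, hy⟩ := wit_exists hex
      exact Or.inr ⟨y, hy.1, hy.2.1, h y hy, hy.2.2⟩
    · exact Or.inl (fun v hv hp => hex ⟨v, hv, hp⟩)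

lemma impl_iff {V : ℕ → Set W} {p q : Formula} {w : W} :
    Truth F V (p.impl q) w ↔ (Truth F V p w → Truth F V q w) := by
  simp only [Formula.impl, Truth]
  tauto

lemma disj_iff {V : ℕ → Set W} {p q : Formula} {w : W} :
    Truth F V (p.disj q) w ↔ (Truth F V p w ∨ Truth F V q w) := by
  simp only [Formula.disj, Truth]
  tauto

lemma biimp_iff {V : ℕ → Set W} {p q : Formula} {w : W} :
    Truth F V (p.biimp q) w ↔ (Truth F V p w ↔ Truth F V q w) := by
  simp only [Formula.biimp, Truth, impl_iff]
  tauto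

lemma box_iff {V : ℕ → Set W} {p : Formula} {w : W} :
    Truth F V p.box w ↔ ∀ u, F.acc w u → Truth F V p u := by
  rw [Formula.box, cond_iff]
  constructor
  · intro h u hu
    by_contra hp
    obtain ⟨y, hy⟩ := wit_exists (P := fun z => Truth F V p.neg z) ⟨u, hu, hp⟩
    exact hy.2.1 (h y hy)
  · intro h y hy
    exact absurd (h y hy.1) hy.2.1

end Basic

section Sound
variable {W : Type} {F : OrderFrame W} {V : ℕ → Set W}

lemma taut_sound {p : Formula} (h : IsTautology p) (w : W) : Truth F V p w :=
  h (fun q => Truth F V q w) (fun _ => Iff.rfl) (fun _ _ => Iff.rfl)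

lemma id_sound (p : Formula) (w : W) : Truth F V (p.cond p) w := by
  rw [cond_iff]; exact fun y hy => hy.2.1

lemma recip_sound (p q r : Formula) (w : W) :
    Truth F V (((p.cond q).conj ((q.cond p).conj (p.cond r))).impl (q.cond r)) w := by
  rw [impl_iff]
  rintro ⟨hpq, hqp, hpr⟩
  rw [cond_iff] at hpq hqp hpr ⊢
  intro y hy
  -- y is witness for q; it satisfies p
  have hpy : Truth F V p y := hqp y hy
  -- so there is a witness for p
  obtain ⟨y', hy'⟩ := wit_exists (P := Truth F V p) ⟨y, hy.1, hpy⟩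
  have hqy' : Truth F V q y' := hpq y' hy'
  -- y' = y
  have : y' = y := by
    rcases F.acc_total hy'.1 hy.1 with h | h | h
    · exact h
    · exact absurd hqy' (hy.2.2 _ h)
    · exact absurd hpy (hy'.2.2 _ h)
  exact this ▸ hpr y' hy'

lemma mp_sound (p q : Formula) (w : W) :
    Truth F V ((p.cond q).impl (p.impl q)) w := by
  rw [impl_iff, impl_iff]
  intro hc hp
  rw [cond_iff] at hc
  exact hc w ⟨F.acc_refl w, hp, fun x hx _ => F.not_lt_base hx⟩

lemma cem_sound (p q : Formula) (w : W) :
    Truth F V ((p.cond q).disj (p.cond q.neg)) w := by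
  rw [disj_iff]
  by_cases hex : ∃ u, F.acc w u ∧ Truth F V p u
  · obtain ⟨y, hy⟩ := wit_exists hex
    by_cases hq : Truth F V q y
    · exact Or.inl (Or.inr ⟨y, hy.1, hy.2.1, hq, hy.2.2⟩)
    · exact Or.inr (Or.inr ⟨y, hy.1, hy.2.1, hq, hy.2.2⟩)
  · exact Or.inl (Or.inl (fun v hv hp => hex ⟨v, hv, hp⟩))

lemma normality_sound {p q r : Formula} (s : Formula)
    (h : ∀ (V : ℕ → Set W) (w : W), Truth F V ((p.conj q).impl r) w) (w : W) :
    Truth F V (((s.cond p).conj (s.cond q)).impl (s.cond r)) w := by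
  rw [impl_iff]
  rintro ⟨hsp, hsq⟩
  rw [cond_iff] at hsp hsq ⊢
  intro y hy
  have := (impl_iff (F := F)).mp (h V y)
  exact this ⟨hsp y hy, hsq y hy⟩

/-- Flattening soundness on flat frames. -/
lemma flattening_sound (hF : Flat F) (p q r : Formula) (w : W) :
    Truth F V ((p.cond ((p.conj q).cond r)).biimp ((p.conj q).cond r)) w := by
  obtain ⟨hsf, hta⟩ := hF
  rw [biimp_iff]
  constructor
  · -- left to right: needs semi-flatness
    intro h
    rw [cond_iff] at h ⊢
    intro y hy
    -- y : witness for p∧q at w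
    have hpy : Truth F V p y := hy.2.1.1
    obtain ⟨y', hy'⟩ := wit_exists (P := Truth F V p) ⟨y, hy.1, hpy⟩
    have hBr : Truth F V ((p.conj q).cond r) y' := h y' hy'
    rw [cond_iff] at hBr
    by_cases hyy : y' = y
    · cases hyy
      exact hBr _ ⟨F.acc_refl _, hy.2.1, fun x hx _ => F.not_lt_base hx⟩
    · -- y' <_w y
      have hlt : F.lt w y' y :=
        F.lt_of_acc_of_not_lt hy'.1 hy.1 hyy (fun hl => hy'.2.2 y hl hpy)
      -- y is a witness for p∧q at y'
      refine hBr y ⟨(hsf w y' y y hlt (Or.inl ⟨hy.1, hy.1, F.lt_irrefl⟩)).2.1,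
        hy.2.1, ?_⟩
      intro x hx hBx
      by_cases hxw : F.acc w x
      · -- x ∈ R(w): then ¬ x <_w y, so y <_w x, semiflat gives ¬ x <_{y'} y
        have hxy : x ≠ y := fun h => F.lt_irrefl (h ▸ hx)
        have hnlt : ¬ F.lt w x y := fun hl => hy.2.2 x hl hBx
        have hywx : F.lt w y x := F.lt_of_acc_of_not_lt hy.1 hxw hxy.symm.symm.symm hnlt
        have := hsf w y' y x hlt (Or.inl ⟨hy.1, hxw, fun hl => F.lt_asymm hywx hl⟩)
        exact this.2.2 hx
      · have := hsf w y' y x hlt (Or.inr ⟨F.acc_of_lt_left hx, hxw⟩)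
        exact this.2.2 hx
  · -- right to left: needs semi-flatness + transitivity
    intro h
    rw [cond_iff] at h ⊢
    intro y' hy'
    rw [cond_iff]
    intro y hy
    -- y witness for p∧q at y'; show y is witness for p∧q at w
    have hacc : F.acc w y := hta w y' y hy'.1 hy.1
    refine h y ⟨hacc, hy.2.1, ?_⟩
    intro x hx hBx
    have hpx : Truth F V p x := hBx.1
    have hnlt : ¬ F.lt w x y' := fun hl => hy'.2.2 x hl hpx
    by_cases hxy' : x = y'
    · subst hxy'
      -- then y' is p∧q-world; y = y' forced, contradiction with lt w x y
      by_cases hyy' : y = x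
      · exact F.lt_irrefl (hyy' ▸ hx)
      · exact hy.2.2 x (F.lt_base_of_acc hy.1 hyy') hBx
    · have hxacc : F.acc w x := F.acc_of_lt_left hx
      have hl1 : F.lt w y' x := F.lt_of_acc_of_not_lt hy'.1 hxacc (Ne.symm hxy') hnlt
      by_cases hxy : x = y
      · exact F.lt_irrefl (hxy ▸ hx)
      · -- from semiflat: wkle y' x y, so ¬ y <_{y'} x;
        have hwk := hsf w y' x y hl1 (Or.inl ⟨hxacc, F.acc_of_lt_right hx, F.lt_asymm hx⟩)
        -- then x <_{y'} y by totality at y'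
        have hxlt : F.lt y' x y := by
          rcases F.acc_total hwk.1 hwk.2.1 with h' | h' | h'
          · exact absurd h' hxy
          · exact h'
          · exact absurd h' hwk.2.2
        exact hy.2.2 x hxlt hBx

end Sound

section Seq
variable {W : Type} {F : OrderFrame W} {V : ℕ → Set W}

lemma truth_neg {p : Formula} {w : W} : Truth F V p.neg w ↔ ¬ Truth F V p w := Iff.rfl
lemma truth_conj {p q : Formula} {w : W} :
    Truth F V (p.conj q) w ↔ Truth F V p w ∧ Truth F V q w := Iff.rfl

lemma seq_sound (hF : Flat F) (hA : Ancestral F) (p q r : Formula) (w : W) :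
    Truth F V (((p.impl (p.neg.cond r)).box.conj (q.impl (q.neg.cond r)).box).impl
      ((p.disj q).impl ((p.disj q).neg.cond r))) w := by
  obtain ⟨hsf, hta⟩ := hF
  rw [impl_iff, truth_conj, box_iff, box_iff]
  rintro ⟨h1, h2⟩
  rw [impl_iff]
  intro hdw
  rw [cond_iff]
  intro y hy
  have hny : ¬ Truth F V (p.disj q) y := truth_neg.mp hy.2.1
  -- induction along the successor chain from w to y
  have main : ∀ (v : W), Relation.ReflTransGen F.SuccRel v y →
      F.acc w v → Truth F V (p.disj q) v → F.acc v y →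
      (∀ x, F.lt v x y → Truth F V (p.disj q) x) → Truth F V r y := by
    intro v hchain
    induction hchain using Relation.ReflTransGen.head_induction_on with
    | refl => intro _ hdv _ _; exact absurd hdv hny
    | head h' _ IH =>
      rename_i v u _
      intro hwv hdv hvy hmin
      by_cases hyv : y = v
      · exact absurd (hyv ▸ hdv) hny
      have hlvy : F.lt v v y := F.lt_base_of_acc hvy hyv
      rcases h' with ⟨hall, _⟩ | ⟨hltu, hleast⟩
      · exact absurd (hall y hvy) hyv
      rcases hleast y hlvy with hyu | huy
      · -- y is the successor of v : use the box hypotheses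
        have hminv : ∀ x, F.lt v x y → x = v := by
          intro x hx
          rcases F.center v x y hx with h | h
          · exact h
          · rcases hleast x h with h'' | h''
            · exact absurd ((h''.trans hyu.symm) ▸ hx : F.lt v y y) F.lt_irrefl
            · exact absurd hx (F.lt_asymm (hyu ▸ h''))
        rcases disj_iff.mp hdv with hp | hq
        · have := (impl_iff).mp (h1 v hwv) hp
          rw [cond_iff] at this
          refine this y ⟨hvy, ?_, ?_⟩
          · exact truth_neg.mpr (fun hpy => hny (disj_iff.mpr (Or.inl hpy)))
          · intro x hx hnx
            exact (truth_neg.mp hnx) ((hminv x hx) ▸ hp)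
        · have := (impl_iff).mp (h2 v hwv) hq
          rw [cond_iff] at this
          refine this y ⟨hvy, ?_, ?_⟩
          · exact truth_neg.mpr (fun hqy => hny (disj_iff.mpr (Or.inr hqy)))
          · intro x hx hnx
            exact (truth_neg.mp hnx) ((hminv x hx) ▸ hq)
      · -- u strictly between v and y : recurse
        have hwu : F.acc w u := hta w v u hwv (Or.inr hltu)
        have hdu : Truth F V (p.disj q) u := hmin u huy
        have huyacc : F.acc u y :=
          (hsf v u y y huy (Or.inl ⟨hvy, hvy, F.lt_irrefl⟩)).2.1
        refine IH hwu hdu huyacc ?_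
        intro x hx
        by_cases hvxy : F.lt v x y
        · exact hmin x hvxy
        by_cases hxv : x = v
        · exact hxv ▸ hdv
        have hvx : F.acc v x := hta v u x (Or.inr hltu) (F.acc_of_lt_left hx)
        have hxy : x ≠ y := fun h => F.lt_irrefl (h ▸ hx)
        have hvyx : F.lt v y x := F.lt_of_acc_of_not_lt hvy hvx (Ne.symm hxy) hvxy
        have := hsf v u y x huy (Or.inl ⟨hvy, hvx, F.lt_asymm hvyx⟩)
        exact absurd hx this.2.2
  exact main w (hA w y hy.1) (F.acc_refl w) hdw hy.1
    (fun x hx => by_contra fun hc => (hy.2.2 x hx) (truth_neg.mpr hc))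

/-- full soundness -/
lemma c2fs_sound (hF : Flat F) (hA : Ancestral F) {f : Formula} (hf : C2FS f) :
    ∀ (V : ℕ → Set W) (w : W), Truth F V f w := by
  induction hf with
  | extra h =>
    intro V w
    rcases h with ⟨p, q, r, rfl⟩ | ⟨p, q, r, rfl⟩
    · exact flattening_sound ⟨hF.1, hF.2⟩ p q r w
    · exact seq_sound ⟨hF.1, hF.2⟩ hA p q r w
  | taut h => exact fun V w => taut_sound h w
  | id p => exact fun V w => id_sound p w
  | recip p q r => exact fun V w => recip_sound p q r w
  | mpAx p q => exact fun V w => mp_sound p q w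
  | cem p q => exact fun V w => cem_sound p q w
  | detach h1 h2 ih1 ih2 => exact fun V w => (impl_iff).mp (ih1 V w) (ih2 V w)
  | normality s h ih => exact fun V w => normality_sound s ih w
end Seq

section Corr
variable {W : Type} {F : OrderFrame W}

open Formula in
/-- the canonical Flattening instance with atoms 0,1,2 -/
def flatInst : Formula :=
  ((atom 0).cond (((atom 0).conj (atom 1)).cond (atom 2))).biimp
    (((atom 0).conj (atom 1)).cond (atom 2))

lemma flatInst_thm : C2FS flatInst :=
  DerivC2.extra (Or.inl ⟨_, _, _, rfl⟩)

lemma transAcc_of_valid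
    (Hval : ∀ p : Formula, C2FS p → ∀ (V : ℕ → Set W) (w : W), Truth F V p w) :
    TransAcc F := by
  intro w u v hwu huv
  by_contra hwv
  have huv' : u ≠ v := fun h => hwv (h ▸ hwu)
  have hwu' : w ≠ u := fun h => hwv (h.symm ▸ huv)
  have hwv' : w ≠ v := fun h => hwv (Or.inl h.symm)
  set V : ℕ → Set W := fun n => match n with
    | 0 => {a | a = u ∨ a = v}
    | 1 => {a | a = v}
    | _ => (∅ : Set W) with hV
  have := Hval flatInst flatInst_thm V w
  rw [flatInst, biimp_iff] at this
  have hrhs : Truth F V (((Formula.atom 0).conj (Formula.atom 1)).cond (Formula.atom 2)) w := by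
    left
    rintro a ha ⟨hp, hq⟩
    have : a = v := hq
    exact hwv (this ▸ ha)
  have hlhs := this.mpr hrhs
  rw [cond_iff] at hlhs
  have hwit : Wit F w (Truth F V (Formula.atom 0)) u := by
    refine ⟨hwu, Or.inl rfl, ?_⟩
    rintro a ha (rfl | rfl)
    · exact F.lt_irrefl ha
    · exact hwv (F.acc_of_lt_left ha)
  have hXu := hlhs u hwit
  rcases hXu with h | ⟨b, hb, hbc, hbr, _⟩
  · exact h v huv ⟨Or.inr rfl, rfl⟩
  · exact hbr

lemma semiFlat_of_valid
    (Hval : ∀ p : Formula, C2FS p → ∀ (V : ℕ → Set W) (w : W), Truth F V p w) :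
    SemiFlat F := by
  intro w x y z hxy hdisj
  by_contra hwk
  have hwy : F.acc w y := F.acc_of_lt_right hxy
  have hwx : F.acc w x := F.acc_of_lt_left hxy
  have hxyne : x ≠ y := fun h => F.lt_irrefl (h ▸ hxy)
  by_cases haxy : F.acc x y
  swap
  · -- Subcase (i): ¬ acc x y
    set V : ℕ → Set W := fun n => match n with
      | 0 => {a | a = x ∨ a = y}
      | 1 => {a | a = y}
      | _ => (∅ : Set W) with hV
    have := Hval flatInst flatInst_thm V w
    rw [flatInst, biimp_iff] at this
    have hlhs : Truth F V ((Formula.atom 0).cond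
        (((Formula.atom 0).conj (Formula.atom 1)).cond (Formula.atom 2))) w := by
      right
      refine ⟨x, hwx, Or.inl rfl, ?_, ?_⟩
      · left
        rintro a ha ⟨hp, hq⟩
        have : a = y := hq
        exact haxy (this ▸ ha)
      · rintro a ha (rfl | rfl)
        · exact F.lt_irrefl ha
        · exact F.lt_asymm hxy ha
    have hrhs := this.mp hlhs
    rcases hrhs with h | ⟨b, hb, hbc, hbr, _⟩
    · exact h y hwy ⟨Or.inr rfl, rfl⟩
    · exact hbr
  by_cases haxz : F.acc x z
  swap
  · -- Subcase (ii-a): acc x y, ¬ acc x z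
    have hwz : F.acc w z ∧ ¬ F.lt w z y := by
      rcases hdisj with h | h
      · exact ⟨h.2.1, h.2.2⟩
      · exact absurd h.1 haxz
    have hzx : z ≠ x := fun h => haxz (h ▸ F.acc_refl x)
    have hnzx : ¬ F.lt w z x := fun h => hwz.2 (F.trans _ _ _ _ h hxy)
    set V : ℕ → Set W := fun n => match n with
      | 0 => {a | a = x ∨ a = z}
      | 1 => {a | a = z}
      | _ => (∅ : Set W) with hV
    have := Hval flatInst flatInst_thm V w
    rw [flatInst, biimp_iff] at this
    have hlhs : Truth F V ((Formula.atom 0).cond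
        (((Formula.atom 0).conj (Formula.atom 1)).cond (Formula.atom 2))) w := by
      right
      refine ⟨x, hwx, Or.inl rfl, ?_, ?_⟩
      · left
        rintro a ha ⟨hp, hq⟩
        have : a = z := hq
        exact haxz (this ▸ ha)
      · rintro a ha (rfl | rfl)
        · exact F.lt_irrefl ha
        · exact hnzx ha
    have hrhs := this.mp hlhs
    rcases hrhs with h | ⟨b, hb, hbc, hbr, _⟩
    · exact h z hwz.1 ⟨Or.inr rfl, rfl⟩
    · exact hbr
  · -- Subcase (ii-b): acc x y, acc x z, and (from ¬wkle) lt x z y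
    have hzy : F.lt x z y := by
      by_contra h
      exact hwk ⟨haxy, haxz, h⟩
    have hzyne : z ≠ y := fun h => F.lt_irrefl (h ▸ hzy)
    have hnwzy : ¬ F.lt w z y := by
      rcases hdisj with h | h
      · exact h.2.2
      · exact fun hl => h.2 (F.acc_of_lt_left hl)
    set V : ℕ → Set W := fun n => match n with
      | 0 => {a | a = x ∨ a = z ∨ a = y}
      | 1 => {a | a = z ∨ a = y}
      | _ => ({a | a = y} : Set W) with hV
    have := Hval flatInst flatInst_thm V w
    rw [flatInst, biimp_iff] at this
    have hrhs : Truth F V (((Formula.atom 0).conj (Formula.atom 1)).cond (Formula.atom 2)) w := by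
      right
      refine ⟨y, hwy, ⟨Or.inr (Or.inr rfl), Or.inr rfl⟩, rfl, ?_⟩
      rintro a ha ⟨hp, (rfl | rfl)⟩
      · exact hnwzy ha
      · exact F.lt_irrefl ha
    have hlhs := this.mpr hrhs
    rw [cond_iff] at hlhs
    have hwit : Wit F w (Truth F V (Formula.atom 0)) x := by
      refine ⟨hwx, Or.inl rfl, ?_⟩
      rintro a ha (rfl | rfl | rfl)
      · exact F.lt_irrefl ha
      · exact hnwzy (F.trans _ _ _ _ ha hxy)
      · exact F.lt_asymm hxy ha
    have hXx := hlhs x hwit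
    rw [cond_iff] at hXx
    have hwit2 : Wit F x (Truth F V ((Formula.atom 0).conj (Formula.atom 1))) z := by
      refine ⟨haxz, ⟨Or.inr (Or.inl rfl), Or.inl rfl⟩, ?_⟩
      rintro a ha ⟨hp, (rfl | rfl)⟩
      · exact F.lt_irrefl ha
      · exact F.lt_asymm hzy ha
    have : Truth F V (Formula.atom 2) z := hXx z hwit2
    exact hzyne this

end Corr

section Anc
variable {W : Type} {F : OrderFrame W}

open Classical in
noncomputable def sigma (F : OrderFrame W) : W → W := fun u =>
  if h : ∃ z, F.lt u u z then (F.wf u).min {z | F.lt u u z} h else u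

lemma sigma_lt {u : W} (h : ∃ z, F.lt u u z) : F.lt u u (sigma F u) := by
  classical
  rw [sigma]
  rw [dif_pos h]
  exact (F.wf u).min_mem _ h

lemma sigma_least {u : W} (h : ∃ z, F.lt u u z) {z : W} (hz : F.lt u u z) :
    z = sigma F u ∨ F.lt u (sigma F u) z := by
  have hmin : ¬ F.lt u z (sigma F u) := by
    classical
    rw [sigma]
    rw [dif_pos h]
    exact (F.wf u).not_lt_min _ hz
  rcases F.acc_total (Or.inr hz) (Or.inr (sigma_lt h)) with h' | h' | h'
  · exact Or.inl h'
  · exact absurd h' hmin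
  · exact Or.inr h'

lemma sigma_succRel {u : W} (h : ∃ z, F.lt u u z) : F.SuccRel u (sigma F u) :=
  Or.inr ⟨sigma_lt h, fun z hz => sigma_least h hz⟩

lemma sigma_ne {u : W} (h : ∃ z, F.lt u u z) : sigma F u ≠ u :=
  fun he => F.lt_irrefl (he ▸ sigma_lt h)

lemma succRel_functional {u c c' : W} (h : F.SuccRel u c) (h' : F.SuccRel u c') :
    c = c' := by
  rcases h with ⟨ha, rfl⟩ | ⟨hl, hle⟩
  · rcases h' with ⟨_, rfl⟩ | ⟨hl', _⟩
    · rfl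
    · exact absurd (ha c' (Or.inr hl')) (fun he => F.lt_irrefl (he ▸ hl'))
  · rcases h' with ⟨ha', rfl⟩ | ⟨hl', hle'⟩
    · exact absurd (ha' c (Or.inr hl)) (fun he => F.lt_irrefl (he ▸ hl))
    · rcases hle c' hl' with h1 | h1
      · exact h1.symm
      · rcases hle' c hl with h2 | h2
        · exact h2
        · exact absurd h1 (F.lt_asymm h2)

variable {w₀ v : W}

/-- every reachable world has v strictly accessible -/
lemma reach_acc_v (hsf : SemiFlat F) (hacc0 : F.acc w₀ v)
    (hnr0 : ¬ Relation.ReflTransGen F.SuccRel w₀ v) : ∀ u, Relation.ReflTransGen F.SuccRel w₀ u →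
    F.acc u v ∧ v ≠ u := by
  intro u hu
  induction hu with
  | refl => exact ⟨hacc0, fun he => hnr0 (he ▸ Relation.ReflTransGen.refl)⟩
  | tail h1 h2 ih =>
    rename_i b c
    have hvc : v ≠ c := fun he => hnr0 (he ▸ (h1.tail h2))
    rcases h2 with ⟨hall, rfl⟩ | ⟨hl, hle⟩
    · exact ⟨ih.1, ih.2⟩
    · have hlbv : F.lt b b v := F.lt_base_of_acc ih.1 ih.2
      rcases hle v hlbv with h' | h'
      · exact absurd h' hvc
      · have := hsf b c v v h' (Or.inl ⟨F.acc_of_lt_right h', F.acc_of_lt_right h', F.lt_irrefl⟩)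
        exact ⟨this.2.1, hvc⟩

lemma reach_ex (hsf : SemiFlat F) (hacc0 : F.acc w₀ v)
    (hnr0 : ¬ Relation.ReflTransGen F.SuccRel w₀ v) {u : W} (hu : Relation.ReflTransGen F.SuccRel w₀ u) :
    ∃ z, F.lt u u z :=
  ⟨v, F.lt_base_of_acc (reach_acc_v hsf hacc0 hnr0 u hu).1
      (reach_acc_v hsf hacc0 hnr0 u hu).2⟩

lemma reach_sigma (hsf : SemiFlat F) (hacc0 : F.acc w₀ v)
    (hnr0 : ¬ Relation.ReflTransGen F.SuccRel w₀ v) {u : W} (hu : Relation.ReflTransGen F.SuccRel w₀ u) :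
    Relation.ReflTransGen F.SuccRel w₀ (sigma F u) :=
  hu.tail (sigma_succRel (reach_ex hsf hacc0 hnr0 hu))

lemma reach_iter (hsf : SemiFlat F) (hacc0 : F.acc w₀ v)
    (hnr0 : ¬ Relation.ReflTransGen F.SuccRel w₀ v) : ∀ n u, Relation.ReflTransGen F.SuccRel w₀ u →
    Relation.ReflTransGen F.SuccRel w₀ ((sigma F)^[n] u) := by
  intro n
  induction n with
  | zero => exact fun u hu => hu
  | succ n ih =>
    intro u hu
    rw [Function.iterate_succ_apply']
    exact reach_sigma hsf hacc0 hnr0 (ih u hu)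

lemma acc_iter (hsf : SemiFlat F) (hta : TransAcc F) (hacc0 : F.acc w₀ v)
    (hnr0 : ¬ Relation.ReflTransGen F.SuccRel w₀ v) : ∀ n u, Relation.ReflTransGen F.SuccRel w₀ u →
    F.acc u ((sigma F)^[n] u) := by
  intro n
  induction n with
  | zero => exact fun u _ => F.acc_refl u
  | succ n ih =>
    intro u hu
    rw [Function.iterate_succ_apply']
    refine hta u _ _ (ih u hu) (Or.inr (sigma_lt ?_))
    exact reach_ex hsf hacc0 hnr0 (reach_iter hsf hacc0 hnr0 n u hu)

/-- the key window lemma: no non-reachable world comes strictly before a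
σ-iterate of a reachable world -/
lemma window (hsf : SemiFlat F) (hta : TransAcc F) (hacc0 : F.acc w₀ v)
    (hnr0 : ¬ Relation.ReflTransGen F.SuccRel w₀ v) : ∀ n u z, Relation.ReflTransGen F.SuccRel w₀ u →
    ¬ Relation.ReflTransGen F.SuccRel w₀ z →
    ¬ F.lt u z ((sigma F)^[n + 1] u) := by
  intro n
  induction n with
  | zero =>
    intro u z hu hz hlt
    rw [Function.iterate_one] at hlt
    have hzu : z ≠ u := fun he => hz (he ▸ hu)
    have hlz : F.lt u u z := by
      rcases F.center u z _ hlt with h | h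
      · exact absurd h hzu
      · exact h
    rcases sigma_least (reach_ex hsf hacc0 hnr0 hu) hlz with h | h
    · exact hz (h ▸ reach_sigma hsf hacc0 hnr0 hu)
    · exact F.lt_asymm hlt h
  | succ n ih =>
    intro u z hu hz hlt
    set s := (sigma F)^[n + 2] u with hs
    set u' := sigma F u with hu'
    have hiter : s = (sigma F)^[n + 1] u' := by
      rw [hu', hs, ← Function.iterate_succ_apply]
    have hru' : Relation.ReflTransGen F.SuccRel w₀ u' :=
      reach_sigma hsf hacc0 hnr0 hu
    have hrs : Relation.ReflTransGen F.SuccRel w₀ s := by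
      rw [hiter]; exact reach_iter hsf hacc0 hnr0 _ _ hru'
    have hzu : z ≠ u := fun he => hz (he ▸ hu)
    have hzu' : z ≠ u' := fun he => hz (he ▸ hru')
    have hzs : z ≠ s := fun he => hz (he ▸ hrs)
    have hlz : F.lt u u z := by
      rcases F.center u z _ hlt with h | h
      · exact absurd h hzu
      · exact h
    have hluz : F.lt u u' z := by
      rcases sigma_least (reach_ex hsf hacc0 hnr0 hu) hlz with h | h
      · exact absurd h hzu'
      · exact h
    by_cases hsu' : s = u'
    · rw [hsu'] at hlt
      exact F.lt_asymm hlt hluz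
    have haccus : F.acc u s := by
      have := acc_iter hsf hta hacc0 hnr0 (n+2) u hu
      rwa [← hs] at this
    have hwk := hsf u u' z s hluz
      (Or.inl ⟨Or.inr hlz, haccus, F.lt_asymm hlt⟩)
    have hltu' : F.lt u' z s :=
      F.lt_of_acc_of_not_lt hwk.1 hwk.2.1 hzs hwk.2.2
    exact ih u' z hru' hz (hiter ▸ hltu')
end Anc

section Anc2
variable {W : Type} {F : OrderFrame W} {w₀ v : W}

lemma reach_index (hsf : SemiFlat F) (hacc0 : F.acc w₀ v)
    (hnr0 : ¬ Relation.ReflTransGen F.SuccRel w₀ v) :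
    ∀ u, Relation.ReflTransGen F.SuccRel w₀ u → ∃ k, (sigma F)^[k] w₀ = u := by
  intro u hu
  induction hu with
  | refl => exact ⟨0, rfl⟩
  | tail h1 h2 ih =>
    rename_i b c
    obtain ⟨k, hk⟩ := ih
    have hσ : F.SuccRel b (sigma F b) :=
      sigma_succRel (reach_ex hsf hacc0 hnr0 h1)
    refine ⟨k + 1, ?_⟩
    rw [Function.iterate_succ_apply', hk]
    exact (succRel_functional hσ h2)

open Formula in
/-- the canonical Sequentiality instance with atoms 0,1,2 -/
def seqInst : Formula :=
  (((atom 0).impl ((atom 0).neg.cond (atom 2))).box.conj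
      ((atom 1).impl ((atom 1).neg.cond (atom 2))).box).impl
    (((atom 0).disj (atom 1)).impl (((atom 0).disj (atom 1)).neg.cond (atom 2)))

lemma seqInst_thm : C2FS seqInst :=
  DerivC2.extra (Or.inr ⟨_, _, _, rfl⟩)

lemma ancestral_of_valid
    (Hval : ∀ p : Formula, C2FS p → ∀ (V : ℕ → Set W) (w : W), Truth F V p w)
    (hsf : SemiFlat F) (hta : TransAcc F) : Ancestral F := by
  intro w v hacc
  by_contra hnr
  by_cases hinj : Function.Injective (fun n => (sigma F)^[n] w)
  · -- Case A : the successor chain from w is injective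
    set V : ℕ → Set W := fun n => match n with
      | 0 => {u | ∃ n, Even n ∧ (sigma F)^[n] w = u}
      | 1 => {u | ∃ n, Odd n ∧ (sigma F)^[n] w = u}
      | _ => ({u | ∃ n, (sigma F)^[n] w = u} : Set W) with hV
    have hv : Truth F V seqInst w := Hval seqInst seqInst_thm V w
    rw [seqInst, impl_iff, truth_conj] at hv
    have hyp1 : Truth F V ((Formula.atom 0).impl
        ((Formula.atom 0).neg.cond (Formula.atom 2))).box w := by
      rw [box_iff]
      intro t ht
      rw [impl_iff]
      rintro ⟨n, hne, rfl⟩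
      set t := (sigma F)^[n] w with hteq
      have hrt : Relation.ReflTransGen F.SuccRel w t :=
        reach_iter hsf hacc hnr n w Relation.ReflTransGen.refl
      have hex := reach_ex hsf hacc hnr hrt
      refine Or.inr ⟨(sigma F)^[n+1] w, ?_, ?_, ⟨n+1, rfl⟩, ?_⟩
      · rw [Function.iterate_succ_apply']
        exact Or.inr (sigma_lt hex)
      · rintro ⟨m, hme, hmeq⟩
        have : m = n + 1 := hinj hmeq
        rw [this, Nat.even_add_one] at hme
        exact hme hne
      · intro x hx
        rw [Function.iterate_succ_apply'] at hx
        have hxt : x = t := by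
          rcases F.center t x _ hx with h | h
          · exact h
          · rcases sigma_least hex h with h' | h'
            · exact absurd (h' ▸ hx) F.lt_irrefl
            · exact absurd hx (F.lt_asymm h')
        exact fun hnx => hnx ⟨n, hne, hxt ▸ rfl⟩
    have hyp2 : Truth F V ((Formula.atom 1).impl
        ((Formula.atom 1).neg.cond (Formula.atom 2))).box w := by
      rw [box_iff]
      intro t ht
      rw [impl_iff]
      rintro ⟨n, hne, rfl⟩
      set t := (sigma F)^[n] w with hteq
      have hrt : Relation.ReflTransGen F.SuccRel w t :=
        reach_iter hsf hacc hnr n w Relation.ReflTransGen.refl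
      have hex := reach_ex hsf hacc hnr hrt
      refine Or.inr ⟨(sigma F)^[n+1] w, ?_, ?_, ⟨n+1, rfl⟩, ?_⟩
      · rw [Function.iterate_succ_apply']
        exact Or.inr (sigma_lt hex)
      · rintro ⟨m, hme, hmeq⟩
        have : m = n + 1 := hinj hmeq
        rw [this, Nat.odd_add_one] at hme
        exact hme hne
      · intro x hx
        rw [Function.iterate_succ_apply'] at hx
        have hxt : x = t := by
          rcases F.center t x _ hx with h | h
          · exact h
          · rcases sigma_least hex h with h' | h'
            · exact absurd (h' ▸ hx) F.lt_irrefl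
            · exact absurd hx (F.lt_asymm h')
        exact fun hnx => hnx ⟨n, hne, hxt ▸ rfl⟩
    have hcon := (impl_iff.mp (hv ⟨hyp1, hyp2⟩))
      (disj_iff.mpr (Or.inl ⟨0, Even.zero, rfl⟩))
    rcases hcon with h | ⟨y, hy, hyneg, hyr, _⟩
    · refine h v hacc (truth_neg.mpr ?_)
      intro hd
      rcases disj_iff.mp hd with ⟨n, _, heq⟩ | ⟨n, _, heq⟩
      · exact hnr (heq ▸ reach_iter hsf hacc hnr n w Relation.ReflTransGen.refl)
      · exact hnr (heq ▸ reach_iter hsf hacc hnr n w Relation.ReflTransGen.refl)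
    · obtain ⟨n, heq⟩ := hyr
      refine truth_neg.mp hyneg (disj_iff.mpr ?_)
      rcases Nat.even_or_odd n with he | ho
      · exact Or.inl ⟨n, he, heq⟩
      · exact Or.inr ⟨n, ho, heq⟩
  · -- Case B : the chain revisits some world
    rw [Function.not_injective_iff] at hinj
    obtain ⟨a, b, heqab, hneab⟩ := hinj
    -- wlog a < b
    obtain ⟨m, n, hmn, heq⟩ : ∃ m n, m < n ∧ (sigma F)^[m] w = (sigma F)^[n] w := by
      rcases Ne.lt_or_gt hneab with h | h
      · exact ⟨a, b, h, heqab⟩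
      · exact ⟨b, a, h, heqab.symm⟩
    set w' := (sigma F)^[m] w with hw'
    set κ := n - m with hκ
    have hκpos : 0 < κ := Nat.sub_pos_of_lt hmn
    have hrw' : Relation.ReflTransGen F.SuccRel w w' :=
      reach_iter hsf hacc hnr m w Relation.ReflTransGen.refl
    have hacc' : F.acc w' v := (reach_acc_v hsf hacc hnr w' hrw').1
    have hnr' : ¬ Relation.ReflTransGen F.SuccRel w' v :=
      fun h => hnr (hrw'.trans h)
    have hper : (sigma F)^[κ] w' = w' := by
      rw [hw', ← Function.iterate_add_apply, hκ, Nat.sub_add_cancel hmn.le, ← heq]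
    have hperK : ∀ K, (sigma F)^[K * κ] w' = w' := by
      intro K
      induction K with
      | zero => simp
      | succ K ih =>
        rw [Nat.succ_mul, Function.iterate_add_apply, hper, ih]
    -- every world reachable from w' returns to w'
    have hret : ∀ t, Relation.ReflTransGen F.SuccRel w' t →
        ∃ j, (sigma F)^[j + 1] t = w' := by
      intro t ht
      obtain ⟨k, hk⟩ := reach_index hsf hacc' hnr' t ht
      have hge : k + 1 ≤ (k + 1) * κ := Nat.le_mul_of_pos_right _ hκpos
      refine ⟨(k + 1) * κ - k - 1, ?_⟩
      have : (k + 1) * κ - k - 1 + 1 + k = (k + 1) * κ := by omega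
      rw [← hk, ← Function.iterate_add_apply, this, hperK]
    set V : ℕ → Set W := fun i => match i with
      | 0 => {u | u = w'}
      | 1 => {u | (∃ k, (sigma F)^[k] w' = u) ∧ u ≠ w'}
      | _ => ({u | ∃ k, (sigma F)^[k] w' = u} : Set W) with hV
    have hv : Truth F V seqInst w' := Hval seqInst seqInst_thm V w'
    rw [seqInst, impl_iff, truth_conj] at hv
    have hex' := reach_ex hsf hacc' hnr' (Relation.ReflTransGen.refl (a := w'))
    have hyp1 : Truth F V ((Formula.atom 0).impl
        ((Formula.atom 0).neg.cond (Formula.atom 2))).box w' := by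
      rw [box_iff]
      intro t ht
      rw [impl_iff]
      intro hp
      have hp' : t = w' := hp
      subst hp'
      refine Or.inr ⟨sigma F w', Or.inr (sigma_lt hex'), sigma_ne hex', ⟨1, rfl⟩, ?_⟩
      intro x hx
      have hxt : x = w' := by
        rcases F.center w' x _ hx with h | h
        · exact h
        · rcases sigma_least hex' h with h' | h'
          · exact absurd (h' ▸ hx) F.lt_irrefl
          · exact absurd hx (F.lt_asymm h')
      exact fun hnx => hnx hxt
    have hyp2 : Truth F V ((Formula.atom 1).impl
        ((Formula.atom 1).neg.cond (Formula.atom 2))).box w' := by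
      rw [box_iff]
      intro t ht
      rw [impl_iff]
      rintro ⟨⟨k, hk⟩, htne⟩
      have hrt : Relation.ReflTransGen F.SuccRel w' t :=
        hk ▸ reach_iter hsf hacc' hnr' k w' Relation.ReflTransGen.refl
      rw [cond_iff]
      intro y hy
      show ∃ j, (sigma F)^[j] w' = y
      by_contra hny
      have hnry : ¬ Relation.ReflTransGen F.SuccRel w' y := by
        intro hr
        exact hny (reach_index hsf hacc' hnr' y hr)
      obtain ⟨j, hj⟩ := hret t hrt
      have hwin : ¬ F.lt t y w' := by
        have := window hsf hta hacc' hnr' j t y hrt hnry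
        rwa [hj] at this
      have hnlt : ¬ F.lt t w' y := by
        intro hl
        refine hy.2.2 w' hl ?_
        rintro ⟨_, hne'⟩
        exact hne' rfl
      have hyne : y ≠ w' := fun h => hny ⟨0, h.symm⟩
      have haccw' : F.acc t w' := hj ▸ acc_iter hsf hta hacc' hnr' (j+1) t hrt
      rcases F.acc_total hy.1 haccw' with h | h | h
      · exact hyne h
      · exact hwin h
      · exact hnlt h
    have hcon := (impl_iff.mp (hv ⟨hyp1, hyp2⟩))
      (disj_iff.mpr (Or.inl rfl))
    have hvne : v ≠ w' :=
      (reach_acc_v hsf hacc' hnr' w' (Relation.ReflTransGen.refl (a := w'))).2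
    rcases hcon with h | ⟨y, hy, hyneg, hyr, _⟩
    · refine h v hacc' (truth_neg.mpr ?_)
      intro hd
      rcases disj_iff.mp hd with h' | ⟨⟨k, hk⟩, _⟩
      · exact hvne h'
      · exact hnr' (hk ▸ reach_iter hsf hacc' hnr' k w' Relation.ReflTransGen.refl)
    · obtain ⟨k, hk⟩ := hyr
      refine truth_neg.mp hyneg (disj_iff.mpr ?_)
      by_cases hyw : y = w'
      · exact Or.inl hyw
      · exact Or.inr ⟨⟨k, hk⟩, hyw⟩

end Anc2


/-- every theorem of C2.FS is valid on an order frame iff the frame is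
flat and ancestral. -/
theorem c2fs_valid_iff_flat_ancestral {W : Type} (F : OrderFrame W) :
    (∀ p : Formula, C2FS p → ∀ (V : ℕ → Set W) (w : W), Truth F V p w) ↔
    (Flat F ∧ Ancestral F) := by
  constructor
  · intro Hval
    have hsf := semiFlat_of_valid Hval
    have hta := transAcc_of_valid Hval
    exact ⟨⟨hsf, hta⟩, ancestral_of_valid Hval hsf hta⟩
  · rintro ⟨hF, hA⟩ p hp V w
    exact c2fs_sound hF hA hp V w
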